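/- arXiv:2510.21556 — 3 statements merged into one kernel-verified Lean document; each statement's English description precedes it below -/
import Mathlib

section
/- Let (X, d) be a metric space, f : X × U → X a dynamics map, ℓ : X × U → ℝ a stage cost, (x_s, u_s) a steady state with f(x_s,u_s) = x_s, Λ : X → ℝ a storage function bounded in absolute value by C/2 on the relevant set, and α : ℝ≥0 → ℝ≥0 strictly increasing with α(0)=0. Suppose the strict dissipation inequality Λ(f(x_k,u_k)) - Λ(x_k) ≤ -α(‖(x_k - x_s, u_k - u_s)‖) + ℓ(x_k,u_k) - ℓ(x_s,u_s) holds along a trajectory (x_k, u_k), k = 0,…,N-1, with x_{k+1} = f(x_k,u_k), and that the total cost satisfies ∑_{k=0}^{N-1} ℓ(x_k,u_k) ≤ N·ℓ(x_s,u_s) + δ. Then for every ε > 0, the number of time indices k ∈ {0,…,N-1} with ‖(x_k - x_s, u_k - u_s)‖ ≤ ε is at least N - (δ + C)/α(ε). -/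
open Finset

/-!
Summing the dissipation inequality along the trajectory telescopes the storage terms, so the
total excess `∑ α(‖(x_k - x_s, u_k - u_s)‖)` is at most the cost excess `δ` plus the
oscillation `Λ(x_0) - Λ(x_N) ≤ C` of the storage function. Each index at which the deviation
exceeds `ε` contributes at least `α ε` to this sum, which bounds the number of such indices
by `(δ + C) / α ε`.
-/

theorem Finset.card_filter_nsmul_le_sum {ι M : Type*} [AddCommMonoid M] [PartialOrder M]
    [IsOrderedAddMonoid M] (s : Finset ι) (p : ι → Prop) [DecidablePred p] (g : ι → M) (c : M)
    (hg : ∀ i ∈ s, 0 ≤ g i) (hc : ∀ i ∈ s, p i → c ≤ g i) :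
    #(s.filter p) • c ≤ ∑ i ∈ s, g i :=
  calc #(s.filter p) • c
      ≤ ∑ i ∈ s.filter p, g i :=
        card_nsmul_le_sum _ _ _ fun i hi => hc i (mem_filter.1 hi).1 (mem_filter.1 hi).2
    _ ≤ ∑ i ∈ s, g i :=
        sum_le_sum_of_subset_of_nonneg (filter_subset _ _) fun i hi _ => hg i hi

theorem Finset.sum_range_le_sum_range_add_of_sub_le {M : Type*} [AddCommGroup M]
    [PartialOrder M] [IsOrderedAddMonoid M] {a s V : ℕ → M} {N : ℕ}
    (h : ∀ k < N, V (k + 1) - V k ≤ s k - a k) :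
    ∑ k ∈ range N, a k ≤ ∑ k ∈ range N, s k + (V 0 - V N) := by
  have hsum : ∑ k ∈ range N, (V (k + 1) - V k) ≤ ∑ k ∈ range N, (s k - a k) :=
    sum_le_sum fun k hk => h k (mem_range.1 hk)
  rw [sum_range_sub, sum_sub_distrib] at hsum
  rw [← sub_nonneg] at hsum ⊢
  convert hsum using 1
  abel

theorem StrictMonoOn.pos_of_pos {α : ℝ → ℝ} (hα : StrictMonoOn α (Set.Ici 0)) (hα0 : α 0 = 0)
    {t : ℝ} (ht : 0 < t) : 0 < α t :=
  hα0 ▸ hα Set.self_mem_Ici ht.le ht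

theorem StrictMonoOn.nonneg_of_nonneg {α : ℝ → ℝ} (hα : StrictMonoOn α (Set.Ici 0))
    (hα0 : α 0 = 0) {t : ℝ} (ht : 0 ≤ t) : 0 ≤ α t :=
  hα0 ▸ hα.monotoneOn Set.self_mem_Ici ht ht

theorem stmt_1_general {X U : Type*} [MetricSpace X] [MetricSpace U]
    (f : X → U → X) (ℓ : X → U → ℝ) (xs : X) (us : U)
    (Λ : X → ℝ) (C : ℝ)
    (α : ℝ → ℝ) (hαmono : StrictMonoOn α (Set.Ici 0)) (hα0 : α 0 = 0)
    (N : ℕ) (x : ℕ → X) (u : ℕ → U)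
    (hdyn : ∀ k < N, x (k + 1) = f (x k) (u k))
    (hΛbd : ∀ k ≤ N, |Λ (x k)| ≤ C / 2)
    (hdiss : ∀ k < N,
      Λ (f (x k) (u k)) - Λ (x k) ≤
        -(α (dist (x k) xs + dist (u k) us)) + ℓ (x k) (u k) - ℓ xs us)
    (δ : ℝ)
    (hcost : ∑ k ∈ Finset.range N, ℓ (x k) (u k) ≤ (N : ℝ) * ℓ xs us + δ) :
    ∀ ε > 0,
      (N : ℝ) - (δ + C) / α ε ≤
        (((Finset.range N).filter
            (fun k => dist (x k) xs + dist (u k) us ≤ ε)).card : ℝ) := by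
  intro ε hε
  set dev : ℕ → ℝ := fun k => dist (x k) xs + dist (u k) us
  have hdev : ∀ k, 0 ≤ dev k := fun k => by positivity
  have hexcess : ∑ k ∈ range N, α (dev k) ≤ δ + C := by
    have htotal := sum_range_le_sum_range_add_of_sub_le (a := fun k => α (dev k))
      (s := fun k => ℓ (x k) (u k) - ℓ xs us) (V := fun k => Λ (x k)) fun k hk => by
        have hstep := hdiss k hk
        rw [← hdyn k hk] at hstep
        linarith
    rw [sum_sub_distrib, sum_const, card_range, nsmul_eq_mul] at htotal
    linarith [abs_le.1 (hΛbd 0 N.zero_le), abs_le.1 (hΛbd N le_rfl)]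
  have hbad := card_filter_nsmul_le_sum (range N) (fun k => ¬dev k ≤ ε) (fun k => α (dev k))
    (α ε) (fun k _ => hαmono.nonneg_of_nonneg hα0 (hdev k))
    fun k _ hk => (hαmono hε.le (hdev k) (not_le.1 hk)).le
  have hbad_card : (#((range N).filter (¬dev · ≤ ε)) : ℝ) ≤ (δ + C) / α ε := by
    rw [le_div_iff₀ (hαmono.pos_of_pos hα0 hε), ← nsmul_eq_mul]
    exact hbad.trans hexcess
  change (N : ℝ) - _ ≤ #((range N).filter (dev · ≤ ε))
  have hN : (N : ℝ) = #((range N).filter (dev · ≤ ε)) + #((range N).filter (¬dev · ≤ ε)) := by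
    rw [← Nat.cast_add, card_filter_add_card_filter_not, card_range]
  linarith

/-- Theorem 3 (strict dissipativity implies the measure turnpike property).
The deviation of `(x k, u k)` from the steady state `(xs, us)` is measured by
`dist (x k) xs + dist (u k) us`. -/
theorem stmt_1 {X U : Type*} [MetricSpace X] [MetricSpace U]
    (f : X → U → X) (ℓ : X → U → ℝ) (xs : X) (us : U) (hss : f xs us = xs)
    (Λ : X → ℝ) (C : ℝ)
    (α : ℝ → ℝ) (hαmono : StrictMonoOn α (Set.Ici 0)) (hα0 : α 0 = 0)
    (N : ℕ) (x : ℕ → X) (u : ℕ → U)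
    (hdyn : ∀ k < N, x (k + 1) = f (x k) (u k))
    (hΛbd : ∀ k ≤ N, |Λ (x k)| ≤ C / 2)
    (hdiss : ∀ k < N,
      Λ (f (x k) (u k)) - Λ (x k) ≤
        -(α (dist (x k) xs + dist (u k) us)) + ℓ (x k) (u k) - ℓ xs us)
    (δ : ℝ)
    (hcost : ∑ k ∈ Finset.range N, ℓ (x k) (u k) ≤ (N : ℝ) * ℓ xs us + δ) :
    ∀ ε > 0,
      (N : ℝ) - (δ + C) / α ε ≤
        (((Finset.range N).filter
            (fun k => dist (x k) xs + dist (u k) us ≤ ε)).card : ℝ) :=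
  stmt_1_general f ℓ xs us Λ C α hαmono hα0 N x u hdyn hΛbd hdiss δ hcost
end

section
/- Let ℓ : X × U → ℝ be a stage cost, (x_s, u_s) a point, Λ : X → ℝ a storage function, f a dynamics map with f(x_s,u_s) = x_s, and α : ℝ≥0 → ℝ≥0 a function with α(t) > 0 for t > 0. Suppose the strict dissipation inequality Λ(f(x̄,ū)) - Λ(x̄) ≤ -α(‖(x̄ - x_s, ū - u_s)‖) + ℓ(x̄,ū) - ℓ(x_s,u_s) holds at every steady state (x̄, ū) in a set S of steady states (i.e., f(x̄,ū) = x̄) containing (x_s,u_s). Then ℓ(x_s, u_s) < ℓ(x̄, ū) for every (x̄, ū) ∈ S with (x̄, ū) ≠ (x_s, u_s). -/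
/-- Lemma 4: among steady states satisfying the strict dissipation inequality,
`(xs, us)` has strictly minimal cost. -/
theorem stmt_2 {X U : Type*} [MetricSpace X] [MetricSpace U]
    (f : X → U → X) (ℓ : X → U → ℝ) (Λ : X → ℝ)
    (xs : X) (us : U) (hss : f xs us = xs)
    (α : ℝ → ℝ) (hαpos : ∀ t : ℝ, 0 < t → 0 < α t)
    (S : Set (X × U))
    (hSsteady : ∀ p ∈ S, f p.1 p.2 = p.1)
    (hmem : (xs, us) ∈ S)
    (hdiss : ∀ p ∈ S,
      Λ (f p.1 p.2) - Λ p.1 ≤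
        -(α (dist p.1 xs + dist p.2 us)) + ℓ p.1 p.2 - ℓ xs us) :
    ∀ p ∈ S, p ≠ (xs, us) → ℓ xs us < ℓ p.1 p.2 := by
  intro p hp hne
  have h := hdiss p hp
  rw [hSsteady p hp, sub_self] at h
  have hd : 0 < dist p.1 xs + dist p.2 us := by
    by_contra hle
    push_neg at hle
    have h1 : dist p.1 xs = 0 := le_antisymm (by linarith [dist_nonneg (x := p.2) (y := us)]) dist_nonneg
    have h2 : dist p.2 us = 0 := le_antisymm (by linarith [dist_nonneg (x := p.1) (y := xs)]) dist_nonneg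
    exact hne (Prod.ext (dist_eq_zero.mp h1) (dist_eq_zero.mp h2))
  have := hαpos _ hd
  linarith
end

section
/- Let each agent v's finite-horizon problem include the linear terminal penalty V_f^v(x_N) = (λ_s^v)ᵀ x_N, and suppose (x_s, (u_s^v), (λ_s^v)) solves the steady-state KKT system (with all inequality multipliers zero): x_s = f(x_s, u_s), λ_s^v = ∇_x ℓ^v(x_s,u_s) + ∇_x f(x_s,u_s)ᵀ λ_s^v, 0 = ∇_{u^v} ℓ^v(x_s,u_s) + ∇_{u^v} f(x_s,u_s)ᵀ λ_s^v. Then for every horizon N ≥ 1 and initial condition x_0 = x_s, the constant trajectory x_k ≡ x_s, u_k^v ≡ u_s^v with constant adjoints λ_k^v ≡ λ_s^v satisfies all the finite-horizon KKT conditions, including the modified boundary condition λ_N^v = ∇V_f^v(x_N) = λ_s^v. -/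
open scoped RealInnerProductSpace

theorem gradient_inner_const_left {F : Type*} [NormedAddCommGroup F] [InnerProductSpace ℝ F]
    [CompleteSpace F] (c x : F) : gradient (fun y => ⟪c, y⟫) x = c :=
  (hasGradientAt_iff_hasFDerivAt.mpr (InnerProductSpace.toDual ℝ F c).hasFDerivAt).gradient

theorem stmt_19_general {n m : ℕ} (V : Type*) [DecidableEq V]
    (f : EuclideanSpace ℝ (Fin n) → (V → EuclideanSpace ℝ (Fin m)) →
      EuclideanSpace ℝ (Fin n))
    (ℓv : V → EuclideanSpace ℝ (Fin n) → (V → EuclideanSpace ℝ (Fin m)) → ℝ)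
    (xst : EuclideanSpace ℝ (Fin n)) (ust : V → EuclideanSpace ℝ (Fin m))
    (lam : V → EuclideanSpace ℝ (Fin n))
    (hss : f xst ust = xst)
    (hlamst : ∀ v : V,
      lam v = gradient (fun x => ℓv v x ust) xst +
        (ContinuousLinearMap.adjoint (fderiv ℝ (fun x => f x ust) xst)) (lam v))
    (hust : ∀ v : V,
      (0 : EuclideanSpace ℝ (Fin m)) =
        gradient (fun uv => ℓv v xst (Function.update ust v uv)) (ust v) +
        (ContinuousLinearMap.adjoint
          (fderiv ℝ (fun uv => f xst (Function.update ust v uv)) (ust v)))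
          (lam v))
    (N : ℕ)
    (xseq : ℕ → EuclideanSpace ℝ (Fin n))
    (useq : V → ℕ → EuclideanSpace ℝ (Fin m))
    (lamseq : V → ℕ → EuclideanSpace ℝ (Fin n))
    (hx : ∀ k, xseq k = xst) (hu : ∀ v k, useq v k = ust v)
    (hlam : ∀ v k, lamseq v k = lam v) :
    (xseq 0 = xst) ∧
    (∀ k < N, xseq (k + 1) = f (xseq k) (fun v => useq v k)) ∧
    (∀ k < N, ∀ v : V,
      lamseq v k = gradient (fun x => ℓv v x ust) (xseq k) +
        (ContinuousLinearMap.adjoint (fderiv ℝ (fun x => f x ust) (xseq k)))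
          (lamseq v (k + 1))) ∧
    (∀ k < N, ∀ v : V,
      (0 : EuclideanSpace ℝ (Fin m)) =
        gradient (fun uv => ℓv v (xseq k) (Function.update ust v uv))
          (useq v k) +
        (ContinuousLinearMap.adjoint
          (fderiv ℝ (fun uv => f (xseq k) (Function.update ust v uv))
            (useq v k))) (lamseq v (k + 1))) ∧
    (∀ v : V,
      lamseq v N = gradient (fun x => ⟪lam v, x⟫) (xseq N)) := by
  obtain rfl : xseq = fun _ => xst := funext hx
  obtain rfl : useq = fun v _ => ust v := funext fun v => funext (hu v)
  obtain rfl : lamseq = fun v _ => lam v := funext fun v => funext (hlam v)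
  exact ⟨rfl, fun _ _ => hss.symm, fun _ _ => hlamst, fun _ _ => hust,
    fun v => (gradient_inner_const_left (lam v) xst).symm⟩

/-- Corollary 14 / Proposition 13(i): with linear terminal penalties
`V_f^v(x) = ⟪λ_s^v, x⟫` and a steady-state KKT point (no active inequality
constraints), the constant steady-state trajectory with constant adjoints
satisfies all finite-horizon KKT conditions, including the terminal
transversality condition. -/
theorem stmt_19 {n m : ℕ} (V : Type*) [Fintype V] [DecidableEq V]
    (f : EuclideanSpace ℝ (Fin n) → (V → EuclideanSpace ℝ (Fin m)) →
      EuclideanSpace ℝ (Fin n))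
    (ℓv : V → EuclideanSpace ℝ (Fin n) → (V → EuclideanSpace ℝ (Fin m)) → ℝ)
    (xst : EuclideanSpace ℝ (Fin n)) (ust : V → EuclideanSpace ℝ (Fin m))
    (lam : V → EuclideanSpace ℝ (Fin n))
    (hss : f xst ust = xst)
    (hlamst : ∀ v : V,
      lam v = gradient (fun x => ℓv v x ust) xst +
        (ContinuousLinearMap.adjoint (fderiv ℝ (fun x => f x ust) xst)) (lam v))
    (hust : ∀ v : V,
      (0 : EuclideanSpace ℝ (Fin m)) =
        gradient (fun uv => ℓv v xst (Function.update ust v uv)) (ust v) +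
        (ContinuousLinearMap.adjoint
          (fderiv ℝ (fun uv => f xst (Function.update ust v uv)) (ust v)))
          (lam v))
    (N : ℕ) (hN : 1 ≤ N)
    (xseq : ℕ → EuclideanSpace ℝ (Fin n))
    (useq : V → ℕ → EuclideanSpace ℝ (Fin m))
    (lamseq : V → ℕ → EuclideanSpace ℝ (Fin n))
    (hx : ∀ k, xseq k = xst) (hu : ∀ v k, useq v k = ust v)
    (hlam : ∀ v k, lamseq v k = lam v) :
    (xseq 0 = xst) ∧
    (∀ k < N, xseq (k + 1) = f (xseq k) (fun v => useq v k)) ∧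
    (∀ k < N, ∀ v : V,
      lamseq v k = gradient (fun x => ℓv v x ust) (xseq k) +
        (ContinuousLinearMap.adjoint (fderiv ℝ (fun x => f x ust) (xseq k)))
          (lamseq v (k + 1))) ∧
    (∀ k < N, ∀ v : V,
      (0 : EuclideanSpace ℝ (Fin m)) =
        gradient (fun uv => ℓv v (xseq k) (Function.update ust v uv))
          (useq v k) +
        (ContinuousLinearMap.adjoint
          (fderiv ℝ (fun uv => f (xseq k) (Function.update ust v uv))
            (useq v k))) (lamseq v (k + 1))) ∧
    (∀ v : V,
      lamseq v N = gradient (fun x => ⟪lam v, x⟫) (xseq N)) :=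
  stmt_19_general V f ℓv xst ust lam hss hlamst hust N xseq useq lamseq hx hu hlam
end
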